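/- Let G be a graph, let M' be a uniquely restricted matching in an induced subgraph G' = G - {u,v} where uv is an edge of G with u of degree 1 in G. Then M' ∪ {uv} is a uniquely restricted matching in G. -/

import Mathlib

/-!
Since `v` is the only neighbour of `u`, every matching of `G` covering `u` contains `uv`.
So a matching `N` of `G` covering the same vertices as `M' ∪ {uv}` is `N' ∪ {uv}`, where
`N' = N \ {uv}` is a matching of `G - {u,v}` covering the same vertices as `M'`; unique
restrictedness of `M'` forces `N' = M'`.
-/

open SimpleGraph

/-- A set of edges `M` is a matching in `G` if all its elements are edges of `G`
and distinct edges of `M` share no endpoint. -/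
def IsMatchingSet {V : Type*} (G : SimpleGraph V) (M : Set (Sym2 V)) : Prop :=
  M ⊆ G.edgeSet ∧ M.Pairwise fun e f => ∀ v : V, v ∈ e → v ∉ f

/-- The set of vertices covered by a set of edges. -/
def coveredVerts {V : Type*} (M : Set (Sym2 V)) : Set V := {v | ∃ e ∈ M, v ∈ e}

/-- A matching is uniquely restricted if no other matching covers the same vertex set. -/
def IsURMatching {V : Type*} (G : SimpleGraph V) (M : Set (Sym2 V)) : Prop :=
  IsMatchingSet G M ∧
    ∀ N : Set (Sym2 V), IsMatchingSet G N → coveredVerts N = coveredVerts M → N = M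

/-- An `M`-alternating cycle: a cycle whose edges alternate (cyclically)
between `M` and the complement of `M`. -/
def IsAltCycle {V : Type*} (G : SimpleGraph V) (M : Set (Sym2 V)) {v : V}
    (c : G.Walk v v) : Prop :=
  c.IsCycle ∧ List.Chain' (fun e f => (e ∈ M) ↔ ¬ (f ∈ M)) c.edges ∧
    ∀ e f : Sym2 V, c.edges.head? = some e → c.edges.getLast? = some f →
      ((f ∈ M) ↔ ¬ (e ∈ M))

/-- The graph obtained from `G` by deleting the vertices in `S`
(they remain as isolated vertices). -/
def delVerts {V : Type*} (G : SimpleGraph V) (S : Set V) : SimpleGraph V where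
  Adj x y := G.Adj x y ∧ x ∉ S ∧ y ∉ S
  symm := ⟨by rintro x y ⟨h, hx, hy⟩; exact ⟨h.symm, hy, hx⟩⟩
  loopless := ⟨by rintro x ⟨h, -, -⟩; exact G.loopless.irrefl x h⟩

/-- The maximum size of a uniquely restricted matching in `G`. -/
noncomputable def nuUR {V : Type*} (G : SimpleGraph V) : ℕ :=
  sSup {k | ∃ M : Set (Sym2 V), IsURMatching G M ∧ M.ncard = k}

/-- The matching number of `G`. -/
noncomputable def nuM {V : Type*} (G : SimpleGraph V) : ℕ :=
  sSup {k | ∃ M : Set (Sym2 V), IsMatchingSet G M ∧ M.ncard = k}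

/-- A bridge is good if it lies on a path between two vertices of degree at most 2. -/
def IsGoodBridge {V : Type*} [Fintype V] (G : SimpleGraph V) [DecidableRel G.Adj]
    (e : Sym2 V) : Prop :=
  G.IsBridge e ∧ ∃ (x y : V) (p : G.Walk x y),
    p.IsPath ∧ G.degree x ≤ 2 ∧ G.degree y ≤ 2 ∧ e ∈ p.edges

section delVerts

variable {V : Type*} {G : SimpleGraph V}

theorem delVerts_le (S : Set V) : delVerts G S ≤ G := fun _ _ h => h.1

theorem mem_edgeSet_delVerts {S : Set V} {e : Sym2 V} :
    e ∈ (delVerts G S).edgeSet ↔ e ∈ G.edgeSet ∧ ∀ x ∈ e, x ∉ S := by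
  induction e using Sym2.ind with
  | _ x y => simp [delVerts]

end delVerts

theorem coveredVerts_insert_mk {V : Type*} (M : Set (Sym2 V)) (u v : V) :
    coveredVerts (insert s(u, v) M) = {u, v} ∪ coveredVerts M := by
  ext x
  simp [coveredVerts, or_assoc]

namespace IsMatchingSet

variable {V : Type*} {G H : SimpleGraph V} {M : Set (Sym2 V)} {u v : V}

theorem mono (hGH : G ≤ H) (hM : IsMatchingSet G M) : IsMatchingSet H M :=
  ⟨hM.1.trans (edgeSet_mono hGH), hM.2⟩

theorem insert {e : Sym2 V} (hM : IsMatchingSet G M) (he : e ∈ G.edgeSet)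
    (hfree : ∀ x ∈ e, x ∉ coveredVerts M) : IsMatchingSet G (insert e M) := by
  refine ⟨Set.insert_subset he hM.1, hM.2.insert fun f hf _ => ⟨?_, ?_⟩⟩
  · exact fun x hxe hxf => hfree x hxe ⟨f, hf, hxf⟩
  · exact fun x hxf hxe => hfree x hxe ⟨f, hf, hxf⟩

theorem eq_of_mem_of_mem {e f : Sym2 V} {x : V} (hM : IsMatchingSet G M)
    (he : e ∈ M) (hf : f ∈ M) (hxe : x ∈ e) (hxf : x ∈ f) : e = f :=
  by_contra fun hef => hM.2 he hf hef x hxe hxf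

theorem mk_mem_of_mem_coveredVerts (hM : IsMatchingSet G M)
    (hu : u ∈ coveredVerts M) (hv : ∀ w, G.Adj u w → w = v) : s(u, v) ∈ M := by
  obtain ⟨e, heM, hue⟩ := hu
  obtain ⟨w, rfl⟩ := Sym2.mem_iff_exists.mp hue
  rwa [← hv w (hM.1 heM)]

theorem sdiff_mk (hM : IsMatchingSet G M) (huv : s(u, v) ∈ M) :
    IsMatchingSet (delVerts G {u, v}) (M \ {s(u, v)}) := by
  refine ⟨fun e ⟨he, hne⟩ => mem_edgeSet_delVerts.mpr ⟨hM.1 he, fun x hxe hx => ?_⟩,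
    hM.2.mono Set.sdiff_subset⟩
  exact hne (hM.eq_of_mem_of_mem he huv hxe (by simpa using hx))

theorem coveredVerts_sdiff_mk (hM : IsMatchingSet G M) (huv : s(u, v) ∈ M) :
    coveredVerts (M \ {s(u, v)}) = coveredVerts M \ {u, v} := by
  ext x
  constructor
  · rintro ⟨e, ⟨he, hne⟩, hxe⟩
    refine ⟨⟨e, he, hxe⟩, fun hx => hne (hM.eq_of_mem_of_mem he huv hxe ?_)⟩
    simpa using hx
  · rintro ⟨⟨e, he, hxe⟩, hx⟩
    refine ⟨e, ⟨he, fun heuv => hx ?_⟩, hxe⟩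
    rw [Set.mem_singleton_iff.mp heuv] at hxe
    simpa using hxe

theorem disjoint_coveredVerts_of_delVerts {S : Set V}
    (hM : IsMatchingSet (delVerts G S) M) : Disjoint (coveredVerts M) S := by
  rw [Set.disjoint_left]
  rintro x ⟨e, he, hxe⟩
  exact (mem_edgeSet_delVerts.mp (hM.1 he)).2 x hxe

end IsMatchingSet

theorem IsURMatching.insert_mk {V : Type*} {G : SimpleGraph V} {u v : V} {M' : Set (Sym2 V)}
    (hM' : IsURMatching (delVerts G {u, v}) M') (huv : G.Adj u v)
    (hforced : ∀ N, IsMatchingSet G N → u ∈ coveredVerts N → s(u, v) ∈ N) :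
    IsURMatching G (insert s(u, v) M') := by
  obtain ⟨hM', huniq⟩ := hM'
  have hfree := hM'.disjoint_coveredVerts_of_delVerts
  refine ⟨(hM'.mono (delVerts_le _)).insert huv fun x hx hxM' => ?_, fun N hN hNcov => ?_⟩
  · exact Set.disjoint_left.mp hfree hxM' (by simpa using hx)
  have huvN : s(u, v) ∈ N := hforced N hN (by simp [hNcov, coveredVerts_insert_mk])
  have hrest : N \ {s(u, v)} = M' := by
    refine huniq _ (hN.sdiff_mk huvN) ?_
    rw [hN.coveredVerts_sdiff_mk huvN, hNcov, coveredVerts_insert_mk, Set.union_sdiff_left,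
      hfree.sdiff_eq_left]
  rw [← hrest, Set.insert_sdiff_singleton, Set.insert_eq_of_mem huvN]

/-- If `uv ∈ E(G)`, `u` has degree `1` in `G`, and `M'` is a uniquely restricted
matching in `G - {u,v}`, then `M' ∪ {uv}` is a uniquely restricted matching in `G`. -/
theorem stmt8 {V : Type*} [Fintype V] (G : SimpleGraph V) [DecidableRel G.Adj]
    (u v : V) (huv : G.Adj u v) (hu : G.degree u = 1)
    (M' : Set (Sym2 V)) (hM' : IsURMatching (delVerts G {u, v}) M') :
    IsURMatching G (insert s(u, v) M') := by
  obtain ⟨w, -, hw⟩ := degree_eq_one_iff_existsUnique_adj.mp hu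
  have hv : ∀ x, G.Adj u x → x = v := fun x hx => (hw x hx).trans (hw v huv).symm
  exact hM'.insert_mk huv fun N hN huN => hN.mk_mem_of_mem_coveredVerts huN hv
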